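/- Let n ≥ 2. The 𝒜_n^ℂ-valued function G_n(Z) = (N(Z)^{1/2})^{−(n+1)} Z⁺ on ℂ_G^{n+1} satisfies G_n = (1−n)^{−1} ∇_ℂ H_n where H_n(Z) = (N(Z)^{1/2})^{1−n}, and G_n is both complex left-monogenic and complex right-monogenic on ℂ_G^{n+1}: ∇⁺_ℂ G_n = 0 and G_n ∇⁺_ℂ = 0. -/

import Mathlib

/-!
Write `g = N(Z)^{1/2}`. Since `g² = N` and `∂N/∂z_j = 2 z_j`, one gets
`∂_j (g^m) = m g^{m-2} z_j` for every integer `m`. Hence `∇_ℂ (g^m) = m g^{m-2} Z⁺`, which is the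
gradient formula for `m = 1 - n`. For `Φ = g^m Z⁺` one has `∂_j Φ = g^m ē_j + m g^{m-2} z_j Z⁺`,
where `ē_j = ±e_j` is the coefficient of `z_j` in `Z⁺`; as `e_j ē_j = ē_j e_j = 1`,
`∇⁺_ℂ Φ = (n + 1) g^m + m g^{m-2} Z Z⁺` and `Φ ∇⁺_ℂ = (n + 1) g^m + m g^{m-2} Z⁺ Z`.
The anticommutation relations give `Z Z⁺ = Z⁺ Z = N(Z) = g²`, so both equal `(n + 1 + m) g^m`,
which vanishes for `m = -(n + 1)`, i.e. for `G_n`.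
-/

open scoped BigOperators

/-- `N(Z) = ∑_{j=0}^n z_j²` on `ℂ^{n+1}`. -/
noncomputable def Ncomplex (n : ℕ) (Z : Fin (n + 1) → ℂ) : ℂ := ∑ j, Z j ^ 2

/-- The domain `ℂ_G^{n+1} = ℂ^{n+1} ∖ {Z : N(Z) is real and ≤ 0}`. -/
def CG (n : ℕ) : Set (Fin (n + 1) → ℂ) :=
  {Z | ¬((Ncomplex n Z).im = 0 ∧ (Ncomplex n Z).re ≤ 0)}

/-- `H_n(Z) = (N(Z)^{1/2})^{1-n}`, with the branch of the square root having positive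
real part (realized by the principal branch `Complex.cpow`). -/
noncomputable def Hfun (n : ℕ) (Z : Fin (n + 1) → ℂ) : ℂ :=
  (Ncomplex n Z ^ ((1 : ℂ) / 2)) ^ ((1 : ℤ) - (n : ℤ))

/-- The `j`-th complex partial derivative of an `A`-valued function. -/
noncomputable def pdC {n : ℕ} {A : Type*} [NormedAddCommGroup A] [NormedSpace ℂ A]
    (f : (Fin (n + 1) → ℂ) → A) (j : Fin (n + 1)) (Z : Fin (n + 1) → ℂ) : A :=
  fderiv ℂ f Z (Pi.single j 1)

/-- The left Dirac operator `∇⁺_ℂ f = ∑_j e_j ∂f/∂z_j` (with `e 0 = 1`). -/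
noncomputable def diracPlusLC {n : ℕ} {A : Type*} [NormedRing A] [NormedAlgebra ℂ A]
    (e : Fin (n + 1) → A) (f : (Fin (n + 1) → ℂ) → A) (Z : Fin (n + 1) → ℂ) : A :=
  ∑ j, e j * pdC f j Z

/-- The left Dirac operator `∇_ℂ f = ∂f/∂z_0 - ∑_{j≥1} e_j ∂f/∂z_j`. -/
noncomputable def diracMinusLC {n : ℕ} {A : Type*} [NormedRing A] [NormedAlgebra ℂ A]
    (e : Fin (n + 1) → A) (f : (Fin (n + 1) → ℂ) → A) (Z : Fin (n + 1) → ℂ) : A :=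
  pdC f 0 Z - ∑ j ∈ Finset.univ.filter (fun j : Fin (n + 1) => j ≠ 0), e j * pdC f j Z

/-- The right Dirac operator `f∇⁺_ℂ = ∑_j (∂f/∂z_j) e_j` (with `e 0 = 1`). -/
noncomputable def diracPlusRC {n : ℕ} {A : Type*} [NormedRing A] [NormedAlgebra ℂ A]
    (e : Fin (n + 1) → A) (f : (Fin (n + 1) → ℂ) → A) (Z : Fin (n + 1) → ℂ) : A :=
  ∑ j, pdC f j Z * e j

/-- `Z⁺ = z_0 e_0 - ∑_{j=1}^n z_j e_j` as an element of the Clifford algebra. -/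
noncomputable def Zplus {n : ℕ} {A : Type*} [NormedRing A] [NormedAlgebra ℂ A]
    (e : Fin (n + 1) → A) (Z : Fin (n + 1) → ℂ) : A :=
  ∑ j, (if j = 0 then Z j else -Z j) • e j

/-- `G_n(Z) = (N(Z)^{1/2})^{-(n+1)} Z⁺`. -/
noncomputable def Gfun {n : ℕ} {A : Type*} [NormedRing A] [NormedAlgebra ℂ A]
    (e : Fin (n + 1) → A) (Z : Fin (n + 1) → ℂ) : A :=
  ((Ncomplex n Z ^ ((1 : ℂ) / 2)) ^ (-((n : ℤ) + 1))) • Zplus e Z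

open Finset

theorem sum_smul_mul_self_of_anticomm {ι R A : Type*} [CommRing R] [Ring A] [Algebra R A]
    [DecidableEq ι] (s : Finset ι) (e : ι → A) (c : ι → R)
    (hsq : ∀ j ∈ s, e j * e j = -1)
    (hanti : ∀ j ∈ s, ∀ k ∈ s, j ≠ k → e j * e k = -(e k * e j)) :
    (∑ j ∈ s, c j • e j) * (∑ j ∈ s, c j • e j) = -(∑ j ∈ s, c j ^ 2) • 1 := by
  induction s using Finset.induction_on with
  | empty => simp
  | insert a s ha ih =>
    set V := ∑ j ∈ s, c j • e j
    have hcross : e a * V + V * e a = 0 := by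
      rw [mul_sum, sum_mul, ← sum_add_distrib]
      refine sum_eq_zero fun j hj => ?_
      rw [mul_smul_comm, smul_mul_assoc, ← smul_add,
        hanti a (mem_insert_self a s) j (mem_insert_of_mem hj) (ne_of_mem_of_not_mem hj ha).symm,
        neg_add_cancel, smul_zero]
    have hV : V * V = -(∑ j ∈ s, c j ^ 2) • 1 :=
      ih (fun j hj => hsq j (mem_insert_of_mem hj))
        (fun j hj k hk => hanti j (mem_insert_of_mem hj) k (mem_insert_of_mem hk))
    rw [sum_insert ha, sum_insert ha]
    calc (c a • e a + V) * (c a • e a + V)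
        = (c a * c a) • (e a * e a) + c a • (e a * V + V * e a) + V * V := by
          simp only [add_mul, mul_add, smul_mul_assoc, mul_smul_comm, smul_add, smul_smul]
          abel
      _ = _ := by rw [hcross, hV, hsq a (mem_insert_self a s)]; module

section Calculus

variable {n : ℕ} {E : Type*} [NormedAddCommGroup E] [NormedSpace ℂ E]
  {Z : Fin (n + 1) → ℂ} {j : Fin (n + 1)}

theorem pdC_comp_of_hasDerivAt {φ : ℂ → ℂ} {φ' : ℂ} {f : (Fin (n + 1) → ℂ) → ℂ}
    (hφ : HasDerivAt φ φ' (f Z)) (hf : DifferentiableAt ℂ f Z) :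
    pdC (φ ∘ f) j Z = φ' * pdC f j Z := by
  rw [pdC, (hφ.comp_hasFDerivAt Z hf.hasFDerivAt).fderiv]
  rfl

theorem pdC_smul {f : (Fin (n + 1) → ℂ) → ℂ} {F : (Fin (n + 1) → ℂ) → E}
    (hf : DifferentiableAt ℂ f Z) (hF : DifferentiableAt ℂ F Z) :
    pdC (fun W => f W • F W) j Z = f Z • pdC F j Z + pdC f j Z • F Z := by
  simp [pdC, fderiv_fun_smul hf hF]

theorem pdC_smul_const {f : (Fin (n + 1) → ℂ) → ℂ} (hf : DifferentiableAt ℂ f Z) (a : E) :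
    pdC (fun W => f W • a) j Z = pdC f j Z • a := by
  simp [pdC, fderiv_smul_const hf]

theorem hasFDerivAt_sum_smul (v : Fin (n + 1) → E) :
    HasFDerivAt (fun W => ∑ i, W i • v i)
      (LinearMap.toContinuousLinearMap (Fintype.linearCombination ℂ v)) Z := by
  convert ContinuousLinearMap.hasFDerivAt _ using 1
  ext W
  simp [Fintype.linearCombination_apply]

theorem pdC_sum_smul (v : Fin (n + 1) → E) : pdC (fun W => ∑ i, W i • v i) j Z = v j := by
  classical
  simp [pdC, (hasFDerivAt_sum_smul v).fderiv, Fintype.linearCombination_apply_single]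

theorem differentiableAt_Ncomplex : DifferentiableAt ℂ (Ncomplex n) Z := by
  unfold Ncomplex
  fun_prop

theorem pdC_Ncomplex : pdC (Ncomplex n) j Z = 2 * Z j := by
  classical
  have h := HasFDerivAt.fun_sum (u := univ) fun i _ => (hasFDerivAt_apply (𝕜 := ℂ) i Z).pow 2
  rw [pdC, show Ncomplex n = fun W => ∑ i, W i ^ 2 from rfl, h.fderiv]
  simp [Pi.single_apply]

end Calculus

theorem hasDerivAt_cpow_half_zpow (m : ℤ) {w : ℂ} (hw : w ∈ Complex.slitPlane) :
    HasDerivAt (fun w : ℂ => (w ^ ((1 : ℂ) / 2)) ^ m)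
      (m / 2 * (w ^ ((1 : ℂ) / 2)) ^ (m - 2)) w := by
  have hroot : w ^ ((1 : ℂ) / 2) ≠ 0 := by
    simpa [Complex.cpow_eq_zero_iff] using Complex.slitPlane_ne_zero hw
  refine ((hasDerivAt_zpow m _ (Or.inl hroot)).comp w
    (Complex.hasStrictDerivAt_cpow_const (c := (1 : ℂ) / 2) hw).hasDerivAt).congr_deriv ?_
  rw [show (1 : ℂ) / 2 - 1 = -(1 / 2) by norm_num, Complex.cpow_neg, zpow_sub₀ hroot,
    zpow_sub₀ hroot]
  field_simp

section SqrtN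

variable {n : ℕ} {Z : Fin (n + 1) → ℂ}

/-- `N(Z)^{1/2}`; by definition `Hfun n = sqrtN n ^ (1 - n)` and
`Gfun e = sqrtN n ^ (-(n + 1)) • Zplus e`. -/
noncomputable def sqrtN (n : ℕ) (Z : Fin (n + 1) → ℂ) : ℂ := Ncomplex n Z ^ ((1 : ℂ) / 2)

theorem mem_CG_iff : Z ∈ CG n ↔ Ncomplex n Z ∈ Complex.slitPlane := by
  rw [Complex.mem_slitPlane_iff, CG, Set.mem_ofPred_eq, not_and_or, not_le]
  tauto

theorem sqrtN_sq : sqrtN n Z ^ 2 = Ncomplex n Z := by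
  rw [sqrtN, show (1 : ℂ) / 2 = ((2 : ℕ) : ℂ)⁻¹ by norm_num]
  exact Complex.cpow_nat_inv_pow _ two_ne_zero

theorem sqrtN_ne_zero (hZ : Ncomplex n Z ∈ Complex.slitPlane) : sqrtN n Z ≠ 0 :=
  fun h => Complex.slitPlane_ne_zero hZ (by rw [← sqrtN_sq, h, zero_pow two_ne_zero])

theorem differentiableAt_sqrtN_zpow (m : ℤ) (hZ : Ncomplex n Z ∈ Complex.slitPlane) :
    DifferentiableAt ℂ (fun W => sqrtN n W ^ m) Z :=
  (hasDerivAt_cpow_half_zpow m hZ).differentiableAt.comp Z differentiableAt_Ncomplex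

theorem sqrtN_zpow_sub_two_mul_Ncomplex (m : ℤ) (hZ : Ncomplex n Z ∈ Complex.slitPlane) :
    sqrtN n Z ^ (m - 2) * Ncomplex n Z = sqrtN n Z ^ m := by
  rw [← sqrtN_sq, ← zpow_natCast, ← zpow_add₀ (sqrtN_ne_zero hZ)]
  norm_num

theorem pdC_sqrtN_zpow (m : ℤ) (hZ : Ncomplex n Z ∈ Complex.slitPlane) (j : Fin (n + 1)) :
    pdC (fun W => sqrtN n W ^ m) j Z = m * sqrtN n Z ^ (m - 2) * Z j := by
  rw [show (fun W => sqrtN n W ^ m) = (fun w : ℂ => (w ^ ((1 : ℂ) / 2)) ^ m) ∘ Ncomplex n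
    from rfl, pdC_comp_of_hasDerivAt (hasDerivAt_cpow_half_zpow m hZ) differentiableAt_Ncomplex,
    pdC_Ncomplex, sqrtN]
  ring

end SqrtN

theorem sum_eq_add_sum_filter_ne_zero {n : ℕ} {M : Type*} [AddCommMonoid M]
    (f : Fin (n + 1) → M) :
    ∑ j, f j = f 0 + ∑ j ∈ univ.filter (fun j : Fin (n + 1) => j ≠ 0), f j := by
  rw [filter_ne', add_sum_erase _ _ (mem_univ 0)]

section CliffordBasis

variable {n : ℕ} {A : Type*} [Ring A] {e : Fin (n + 1) → A}

/-- The coefficient `±e_j` of `z_j` in `Z⁺`. -/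
def conjBasis (e : Fin (n + 1) → A) (j : Fin (n + 1)) : A := if j = 0 then e j else -e j

theorem mul_conjBasis_self (he0 : e 0 = 1) (hsq : ∀ j : Fin (n + 1), j ≠ 0 → e j * e j = -1)
    (j : Fin (n + 1)) : e j * conjBasis e j = 1 := by
  by_cases hj : j = 0
  · simp [conjBasis, hj, he0]
  · simp [conjBasis, hj, hsq j hj]

theorem conjBasis_mul_self (he0 : e 0 = 1) (hsq : ∀ j : Fin (n + 1), j ≠ 0 → e j * e j = -1)
    (j : Fin (n + 1)) : conjBasis e j * e j = 1 := by
  by_cases hj : j = 0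
  · simp [conjBasis, hj, he0]
  · simp [conjBasis, hj, hsq j hj]

end CliffordBasis

section Zplus

variable {n : ℕ} {A : Type*} [NormedRing A] [NormedAlgebra ℂ A] {e : Fin (n + 1) → A}
  {Z : Fin (n + 1) → ℂ}

theorem Zplus_eq_sum_conjBasis : Zplus e = fun W => ∑ j, W j • conjBasis e j := by
  refine funext fun W => sum_congr rfl fun j _ => ?_
  by_cases hj : j = 0 <;> simp [conjBasis, hj]

theorem differentiableAt_Zplus : DifferentiableAt ℂ (Zplus e) Z := by
  rw [Zplus_eq_sum_conjBasis]
  exact (hasFDerivAt_sum_smul _).differentiableAt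

theorem pdC_Zplus (j : Fin (n + 1)) : pdC (Zplus e) j Z = conjBasis e j := by
  rw [Zplus_eq_sum_conjBasis, pdC_sum_smul]

theorem Zplus_eq_sub (he0 : e 0 = 1) :
    Zplus e Z
      = Z 0 • (1 : A) - ∑ j ∈ univ.filter (fun j : Fin (n + 1) => j ≠ 0), Z j • e j := by
  rw [Zplus, sum_eq_add_sum_filter_ne_zero, if_pos rfl, he0, sub_eq_add_neg, ← sum_neg_distrib]
  refine congrArg _ (sum_congr rfl fun j hj => ?_)
  rw [if_neg (mem_filter.1 hj).2, neg_smul]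

theorem sum_smul_mul_Zplus_and_Zplus_mul_sum_smul (he0 : e 0 = 1)
    (hsq : ∀ j : Fin (n + 1), j ≠ 0 → e j * e j = -1)
    (hanti : ∀ j k : Fin (n + 1), j ≠ 0 → k ≠ 0 → j ≠ k → e j * e k = -(e k * e j)) :
    (∑ j, Z j • e j) * Zplus e Z = Ncomplex n Z • 1 ∧
      Zplus e Z * (∑ j, Z j • e j) = Ncomplex n Z • 1 := by
  set V := ∑ j ∈ univ.filter (fun j : Fin (n + 1) => j ≠ 0), Z j • e j
  have hV : V * V = -(∑ j ∈ univ.filter (fun j : Fin (n + 1) => j ≠ 0), Z j ^ 2) • 1 :=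
    sum_smul_mul_self_of_anticomm _ e Z (fun j hj => hsq j (mem_filter.1 hj).2)
      fun j hj k hk => hanti j k (mem_filter.1 hj).2 (mem_filter.1 hk).2
  have hZvec : ∑ j, Z j • e j = Z 0 • 1 + V := by rw [sum_eq_add_sum_filter_ne_zero, he0]
  have hZplus : Zplus e Z = Z 0 • 1 - V := Zplus_eq_sub he0
  rw [hZvec, hZplus, Ncomplex, sum_eq_add_sum_filter_ne_zero (fun j => Z j ^ 2)]
  constructor <;>
  · simp only [add_mul, mul_add, sub_mul, mul_sub, smul_mul_assoc, mul_smul_comm, one_mul,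
      mul_one, hV]
    module

end Zplus

section Dirac

variable {n : ℕ} {A : Type*} [NormedRing A] [NormedAlgebra ℂ A] {e : Fin (n + 1) → A}
  {Z : Fin (n + 1) → ℂ}

theorem diracMinusLC_sqrtN_zpow_smul_one (he0 : e 0 = 1) (m : ℤ)
    (hZ : Ncomplex n Z ∈ Complex.slitPlane) :
    diracMinusLC e (fun W => sqrtN n W ^ m • (1 : A)) Z
      = (m * sqrtN n Z ^ (m - 2)) • Zplus e Z := by
  have hpd : ∀ j, pdC (fun W => sqrtN n W ^ m • (1 : A)) j Z
      = (m * sqrtN n Z ^ (m - 2) * Z j) • 1 := fun j => by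
    rw [pdC_smul_const (differentiableAt_sqrtN_zpow m hZ), pdC_sqrtN_zpow m hZ]
  simp only [diracMinusLC, hpd, Zplus_eq_sub he0, smul_sub, mul_smul_comm, mul_one, smul_sum,
    smul_smul]

theorem pdC_sqrtN_zpow_smul_Zplus (m : ℤ) (hZ : Ncomplex n Z ∈ Complex.slitPlane)
    (j : Fin (n + 1)) :
    pdC (fun W => sqrtN n W ^ m • Zplus e W) j Z
      = sqrtN n Z ^ m • conjBasis e j + (m * sqrtN n Z ^ (m - 2) * Z j) • Zplus e Z := by
  rw [pdC_smul (differentiableAt_sqrtN_zpow m hZ) differentiableAt_Zplus, pdC_Zplus,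
    pdC_sqrtN_zpow m hZ]

theorem diracPlusLC_sqrtN_zpow_smul_Zplus (he0 : e 0 = 1)
    (hsq : ∀ j : Fin (n + 1), j ≠ 0 → e j * e j = -1)
    (hanti : ∀ j k : Fin (n + 1), j ≠ 0 → k ≠ 0 → j ≠ k → e j * e k = -(e k * e j))
    (m : ℤ) (hZ : Ncomplex n Z ∈ Complex.slitPlane) :
    diracPlusLC e (fun W => sqrtN n W ^ m • Zplus e W) Z
      = ((n + 1 + m) * sqrtN n Z ^ m) • 1 := by
  calc ∑ j, e j * pdC (fun W => sqrtN n W ^ m • Zplus e W) j Z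
      = ∑ j, (sqrtN n Z ^ m • (1 : A)
          + (m * sqrtN n Z ^ (m - 2)) • ((Z j • e j) * Zplus e Z)) := by
        refine sum_congr rfl fun j _ => ?_
        rw [pdC_sqrtN_zpow_smul_Zplus m hZ, mul_add, mul_smul_comm, mul_conjBasis_self he0 hsq,
          mul_smul_comm, smul_mul_assoc, smul_smul]
    _ = ((n + 1) * sqrtN n Z ^ m) • 1
          + (m * sqrtN n Z ^ (m - 2)) • ((∑ j, Z j • e j) * Zplus e Z) := by
        rw [sum_add_distrib, sum_const, card_univ, Fintype.card_fin, ← smul_sum, ← sum_mul]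
        module
    _ = ((n + 1 + m) * sqrtN n Z ^ m) • 1 := by
        rw [(sum_smul_mul_Zplus_and_Zplus_mul_sum_smul he0 hsq hanti).1, smul_smul, mul_assoc,
          sqrtN_zpow_sub_two_mul_Ncomplex m hZ, ← add_smul]
        ring_nf

theorem diracPlusRC_sqrtN_zpow_smul_Zplus (he0 : e 0 = 1)
    (hsq : ∀ j : Fin (n + 1), j ≠ 0 → e j * e j = -1)
    (hanti : ∀ j k : Fin (n + 1), j ≠ 0 → k ≠ 0 → j ≠ k → e j * e k = -(e k * e j))
    (m : ℤ) (hZ : Ncomplex n Z ∈ Complex.slitPlane) :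
    diracPlusRC e (fun W => sqrtN n W ^ m • Zplus e W) Z
      = ((n + 1 + m) * sqrtN n Z ^ m) • 1 := by
  calc ∑ j, pdC (fun W => sqrtN n W ^ m • Zplus e W) j Z * e j
      = ∑ j, (sqrtN n Z ^ m • (1 : A)
          + (m * sqrtN n Z ^ (m - 2)) • (Zplus e Z * (Z j • e j))) := by
        refine sum_congr rfl fun j _ => ?_
        rw [pdC_sqrtN_zpow_smul_Zplus m hZ, add_mul, smul_mul_assoc, conjBasis_mul_self he0 hsq,
          smul_mul_assoc, mul_smul_comm, smul_smul]
    _ = ((n + 1) * sqrtN n Z ^ m) • 1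
          + (m * sqrtN n Z ^ (m - 2)) • (Zplus e Z * (∑ j, Z j • e j)) := by
        rw [sum_add_distrib, sum_const, card_univ, Fintype.card_fin, ← smul_sum, ← mul_sum]
        module
    _ = ((n + 1 + m) * sqrtN n Z ^ m) • 1 := by
        rw [(sum_smul_mul_Zplus_and_Zplus_mul_sum_smul he0 hsq hanti).2, smul_smul, mul_assoc,
          sqrtN_zpow_sub_two_mul_Ncomplex m hZ, ← add_smul]
        ring_nf

end Dirac

/-- for `n ≥ 2`, `G_n = (1-n)⁻¹ ∇_ℂ H_n` on `ℂ_G^{n+1}`, and `G_n` is both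
complex left-monogenic and complex right-monogenic there: `∇⁺_ℂ G_n = 0` and
`G_n ∇⁺_ℂ = 0`. -/
theorem Gfun_eq_grad_Hfun_and_monogenic {A : Type*} [NormedRing A] [NormedAlgebra ℂ A]
    (n : ℕ) (hn : 2 ≤ n)
    (e : Fin (n + 1) → A) (he0 : e 0 = 1)
    (hsq : ∀ j : Fin (n + 1), j ≠ 0 → e j * e j = -1)
    (hanti : ∀ j k : Fin (n + 1), j ≠ 0 → k ≠ 0 → j ≠ k → e j * e k = -(e k * e j)) :
    ∀ Z ∈ CG n,
      Gfun e Z = ((1 : ℂ) - (n : ℂ))⁻¹ • diracMinusLC e (fun W => Hfun n W • (1 : A)) Z ∧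
      diracPlusLC e (Gfun e) Z = 0 ∧
      diracPlusRC e (Gfun e) Z = 0 := by
  intro Z hZ
  rw [mem_CG_iff] at hZ
  have hGfun : Gfun e = fun W => sqrtN n W ^ (-((n : ℤ) + 1)) • Zplus e W := rfl
  have hweight : (n + 1 + ((-((n : ℤ) + 1) : ℤ) : ℂ)) = 0 := by push_cast; ring
  refine ⟨?_, ?_, ?_⟩
  · have h1n : (1 : ℂ) - n ≠ 0 := by
      rw [sub_ne_zero]
      exact_mod_cast (by omega : 1 ≠ n)
    have hHfun :
        (fun W => Hfun n W • (1 : A)) = fun W => sqrtN n W ^ (1 - (n : ℤ)) • (1 : A) := rfl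
    rw [hHfun, diracMinusLC_sqrtN_zpow_smul_one he0 _ hZ, smul_smul, ← mul_assoc]
    push_cast
    rw [inv_mul_cancel₀ h1n, one_mul, show 1 - (n : ℤ) - 2 = -((n : ℤ) + 1) by ring]
    rfl
  · rw [hGfun, diracPlusLC_sqrtN_zpow_smul_Zplus he0 hsq hanti _ hZ, hweight, zero_mul, zero_smul]
  · rw [hGfun, diracPlusRC_sqrtN_zpow_smul_Zplus he0 hsq hanti _ hZ, hweight, zero_mul, zero_smul]
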